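/- arXiv:2106.08659 — 3 statements merged into one kernel-verified Lean document; each statement's English description precedes it below -/
import Mathlib

section
/- Let σ_x and σ_z be the Pauli matrices and e₁ = (1,1)/√2, e₂ = (1,-1)/√2 the eigenvectors of σ_x. Then for any n ∈ ℕ and t₁,…,t_n ≥ 0: ⟨e₁, σ_z e^{t₁σ_x} σ_z e^{t₂σ_x} ⋯ e^{t_nσ_x} σ_z e₁⟩ = 0 if n is even and equals exp(∑_{j=1}^n (-1)^j t_j) if n is odd. -/
/-! σ_z swaps the σ_x-eigenvectors e₁ and e₂, on which e^{tσ_x} acts by e^{t} and e^{-t}. Hence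
each factor e^{tσ_x} σ_z sends e₁ or e₂ to a positive multiple of the other one, so the whole
product sends e₁ to a multiple of e₁ or of e₂ according to the parity of n, and e₁ ⊥ e₂. -/

open Matrix

noncomputable section

def sigmaX : Matrix (Fin 2) (Fin 2) ℝ := !![0, 1; 1, 0]
def sigmaZ : Matrix (Fin 2) (Fin 2) ℝ := !![1, 0; 0, -1]

/-- `e₁ = (1,1)/√2`, the `+1`-eigenvector of `σ_x`. -/
def eVec₁ : Fin 2 → ℝ := ![1 / Real.sqrt 2, 1 / Real.sqrt 2]

/-- The alternating product `σ_z e^{t₁ σ_x} σ_z e^{t₂ σ_x} ⋯ e^{t_n σ_x} σ_z`. -/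
def spinProd (n : ℕ) (t : Fin n → ℝ) : Matrix (Fin 2) (Fin 2) ℝ :=
  sigmaZ * (List.ofFn (fun j : Fin n =>
    NormedSpace.exp (t j • sigmaX) * sigmaZ)).prod

open NormedSpace
open scoped Nat

section

attribute [local instance] Matrix.linftyOpNormedRing Matrix.linftyOpNormedAlgebra

theorem Matrix.exp_mulVec_of_mulVec_eq_smul {m 𝕂 : Type*} [Fintype m] [DecidableEq m]
    [RCLike 𝕂] {A : Matrix m m 𝕂} {v : m → 𝕂} {c : 𝕂} (h : A *ᵥ v = c • v) :
    exp A *ᵥ v = exp c • v := by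
  have hpow (k : ℕ) : A ^ k *ᵥ v = c ^ k • v := by
    induction k with
    | zero => simp
    | succ k ih => rw [pow_succ', ← mulVec_mulVec, ih, mulVec_smul, h, smul_smul, pow_succ]
  have hA : HasSum (fun k : ℕ => ((k ! : 𝕂)⁻¹ • A ^ k) *ᵥ v) (exp A *ᵥ v) :=
    (exp_series_hasSum_exp' (𝕂 := 𝕂) A).map (mulVec.addMonoidHomLeft v)
      (continuous_id.matrix_mulVec continuous_const)
  have hc : HasSum (fun k : ℕ => ((k ! : 𝕂)⁻¹ • c ^ k) • v) (exp c • v) :=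
    (exp_series_hasSum_exp' c).smul_const v
  refine hA.unique ?_
  simpa only [smul_mulVec, hpow, smul_smul, smul_eq_mul] using hc

end

def eVec₂ : Fin 2 → ℝ := ![1 / Real.sqrt 2, -(1 / Real.sqrt 2)]

lemma sigmaX_mulVec_eVec₁ : sigmaX *ᵥ eVec₁ = (1 : ℝ) • eVec₁ := by
  ext i; fin_cases i <;> simp [sigmaX, eVec₁, mulVec, dotProduct]

lemma sigmaX_mulVec_eVec₂ : sigmaX *ᵥ eVec₂ = (-1 : ℝ) • eVec₂ := by
  ext i; fin_cases i <;> simp [sigmaX, eVec₂, mulVec, dotProduct]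

lemma sigmaZ_mulVec_eVec₁ : sigmaZ *ᵥ eVec₁ = eVec₂ := by
  ext i; fin_cases i <;> simp [sigmaZ, eVec₁, eVec₂, mulVec, dotProduct]

lemma sigmaZ_mulVec_eVec₂ : sigmaZ *ᵥ eVec₂ = eVec₁ := by
  ext i; fin_cases i <;> simp [sigmaZ, eVec₁, eVec₂, mulVec, dotProduct]

lemma exp_smul_sigmaX_mulVec_eVec₁ (s : ℝ) :
    exp (s • sigmaX) *ᵥ eVec₁ = Real.exp s • eVec₁ := by
  rw [Real.exp_eq_exp_ℝ, exp_mulVec_of_mulVec_eq_smul (c := s)]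
  rw [smul_mulVec, sigmaX_mulVec_eVec₁, smul_smul, mul_one]

lemma exp_smul_sigmaX_mulVec_eVec₂ (s : ℝ) :
    exp (s • sigmaX) *ᵥ eVec₂ = Real.exp (-s) • eVec₂ := by
  rw [Real.exp_eq_exp_ℝ, exp_mulVec_of_mulVec_eq_smul (c := -s)]
  rw [smul_mulVec, sigmaX_mulVec_eVec₂, smul_smul, mul_neg_one]

lemma eVec₁_dotProduct_eVec₁ : eVec₁ ⬝ᵥ eVec₁ = 1 := by
  have h : Real.sqrt 2 ^ 2 = 2 := Real.sq_sqrt zero_le_two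
  simp only [dotProduct, Fin.sum_univ_two, eVec₁, cons_val_zero, cons_val_one]
  field_simp
  linarith

lemma eVec₁_dotProduct_eVec₂ : eVec₁ ⬝ᵥ eVec₂ = 0 := by
  simp [dotProduct, eVec₁, eVec₂]

def eVecOfParity (n : ℕ) : Fin 2 → ℝ := if Even n then eVec₁ else eVec₂

lemma exp_smul_sigmaX_mul_sigmaZ_mulVec_eVecOfParity (s : ℝ) (n : ℕ) :
    (exp (s • sigmaX) * sigmaZ) *ᵥ eVecOfParity n
      = Real.exp ((-1) ^ (n + 1) * s) • eVecOfParity (n + 1) := by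
  rcases Nat.even_or_odd n with hn | hn
  · have hsign : (-1 : ℝ) ^ (n + 1) * s = -s := by rw [pow_succ, hn.neg_one_pow]; ring
    rw [eVecOfParity, if_pos hn, eVecOfParity, if_neg (Nat.not_even_iff_odd.mpr hn.add_one),
      ← mulVec_mulVec, sigmaZ_mulVec_eVec₁, exp_smul_sigmaX_mulVec_eVec₂, hsign]
  · have hsign : (-1 : ℝ) ^ (n + 1) * s = s := by rw [pow_succ, hn.neg_one_pow]; ring
    rw [eVecOfParity, if_neg (Nat.not_even_iff_odd.mpr hn), eVecOfParity, if_pos hn.add_one,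
      ← mulVec_mulVec, sigmaZ_mulVec_eVec₂, exp_smul_sigmaX_mulVec_eVec₁, hsign]

lemma list_prod_exp_smul_sigmaX_mul_sigmaZ_mulVec_eVec₁ (n : ℕ) (t : Fin n → ℝ) :
    (List.ofFn fun j : Fin n => exp (t j • sigmaX) * sigmaZ).prod *ᵥ eVec₁
      = Real.exp (∑ j : Fin n, (-1) ^ (n + j) * t j) • eVecOfParity n := by
  induction n with
  | zero => simp [eVecOfParity]
  | succ n ih =>
    rw [List.ofFn_succ, List.prod_cons, ← mulVec_mulVec, ih, mulVec_smul,
      exp_smul_sigmaX_mul_sigmaZ_mulVec_eVecOfParity, smul_smul, ← Real.exp_add,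
      Fin.sum_univ_succ]
    have hsign (j : ℕ) : (-1 : ℝ) ^ (n + 1 + (j + 1)) = (-1) ^ (n + j) := by
      rw [show n + 1 + (j + 1) = n + j + 2 by omega, pow_add, neg_one_sq, mul_one]
    simp only [Fin.val_zero, Fin.val_succ, add_zero, hsign]
    rw [add_comm]

theorem spin_matrix_element_e1_e1_general (n : ℕ) (t : Fin n → ℝ) :
    eVec₁ ⬝ᵥ (spinProd n t *ᵥ eVec₁)
      = if Even n then 0
        else Real.exp (∑ j : Fin n, (-1 : ℝ) ^ ((j : ℕ) + 1) * t j) := by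
  rw [spinProd, ← mulVec_mulVec, list_prod_exp_smul_sigmaX_mul_sigmaZ_mulVec_eVec₁, mulVec_smul,
    dotProduct_smul]
  rcases Nat.even_or_odd n with hn | hn
  · rw [eVecOfParity, if_pos hn, if_pos hn, sigmaZ_mulVec_eVec₁, eVec₁_dotProduct_eVec₂,
      smul_zero]
  · have hsign (j : ℕ) : (-1 : ℝ) ^ (n + j) = (-1) ^ (j + 1) := by
      rw [pow_add, hn.neg_one_pow, pow_succ, mul_comm]
    have hn' : ¬Even n := Nat.not_even_iff_odd.mpr hn
    rw [eVecOfParity, if_neg hn', if_neg hn', sigmaZ_mulVec_eVec₂, eVec₁_dotProduct_eVec₁,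
      smul_eq_mul, mul_one]
    simp only [hsign]

/-- `⟨e₁, σ_z e^{t₁σ_x} σ_z e^{t₂σ_x} ⋯ e^{t_nσ_x} σ_z e₁⟩ = 0` if `n` is even and
`= exp(∑_{j=1}^n (-1)^j t_j)` if `n` is odd (with `t j` corresponding to `t_{j+1}`). -/
theorem spin_matrix_element_e1_e1 (n : ℕ) (t : Fin n → ℝ) (ht : ∀ j, 0 ≤ t j) :
    eVec₁ ⬝ᵥ (spinProd n t *ᵥ eVec₁)
      = if Even n then 0
        else Real.exp (∑ j : Fin n, (-1 : ℝ) ^ ((j : ℕ) + 1) * t j) :=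
  spin_matrix_element_e1_e1_general n t

end
end

section
/- For any t ∈ ℝ, the map j_t f(k,s) = (e^{-i t s}/√π) ω(k)^{1/2} f(k) defines an isometry from L²(ℝ^d) into the weighted space E = L²(ℝ^{d+1}, (ω(k)²+s²)^{-1} d(k,s)). -/
/-! Since `|e^{-its}| = 1`, the integrand is `|f k|² / π` times the Cauchy kernel
`ω k / (ω k² + s²)`, whose integral over `s` is `π` when `ω k > 0`; Tonelli finishes. -/

open MeasureTheory

lemma lintegral_ofReal_div_sq_add_sq {a : ℝ} (ha : 0 < a) :
    ∫⁻ s : ℝ, ENNReal.ofReal (a / (a ^ 2 + s ^ 2)) = ENNReal.ofReal Real.pi := by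
  have hrescale : ∀ s : ℝ, a / (a ^ 2 + s ^ 2) = a⁻¹ * (1 + (s / a) ^ 2)⁻¹ := fun s => by
    field_simp
  have hint : Integrable fun s : ℝ => a⁻¹ * (1 + (s / a) ^ 2)⁻¹ :=
    (integrable_inv_one_add_sq.comp_div ha.ne').const_mul _
  have hnonneg : 0 ≤ᵐ[volume] fun s : ℝ => a⁻¹ * (1 + (s / a) ^ 2)⁻¹ :=
    ae_of_all _ fun s => by positivity
  simp_rw [hrescale, ← ofReal_integral_eq_lintegral_ofReal hint hnonneg, integral_const_mul,
    Measure.integral_comp_div (fun y : ℝ => (1 + y ^ 2)⁻¹) a, integral_univ_inv_one_add_sq,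
    abs_of_pos ha, smul_eq_mul, inv_mul_cancel_left₀ ha.ne']

lemma norm_sq_jt_div {w : ℝ} (hw : 0 ≤ w) (t s : ℝ) (z : ℂ) :
    ‖(Complex.exp (-(Complex.I * t * s)) / (Real.sqrt Real.pi : ℂ))
        * (Real.sqrt w : ℂ) * z‖ ^ 2 / (w ^ 2 + s ^ 2)
      = ‖z‖ ^ 2 / Real.pi * (w / (w ^ 2 + s ^ 2)) := by
  have hexp : ‖Complex.exp (-(Complex.I * t * s))‖ = 1 := by
    rw [Complex.norm_exp]
    simp
  rw [norm_mul, norm_mul, norm_div, hexp, Complex.norm_real, Complex.norm_real,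
    Real.norm_of_nonneg (Real.sqrt_nonneg _), Real.norm_of_nonneg (Real.sqrt_nonneg _),
    mul_pow, mul_pow, div_pow, one_pow, Real.sq_sqrt Real.pi_pos.le, Real.sq_sqrt hw]
  ring

lemma lintegral_norm_sq_jt_div {w : ℝ} (hw : 0 < w) (t : ℝ) (z : ℂ) :
    ∫⁻ s : ℝ, ENNReal.ofReal
        (‖(Complex.exp (-(Complex.I * t * s)) / (Real.sqrt Real.pi : ℂ))
          * (Real.sqrt w : ℂ) * z‖ ^ 2 / (w ^ 2 + s ^ 2))
      = ENNReal.ofReal (‖z‖ ^ 2) := by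
  have hc : 0 ≤ ‖z‖ ^ 2 / Real.pi := by positivity
  simp_rw [norm_sq_jt_div hw.le, ENNReal.ofReal_mul hc]
  rw [lintegral_const_mul' _ _ ENNReal.ofReal_ne_top, lintegral_ofReal_div_sq_add_sq hw,
    ← ENNReal.ofReal_mul hc, div_mul_cancel₀ _ Real.pi_pos.ne']

/-- For any `t ∈ ℝ`, the map `j_t f (k,s) = (e^{-i t s}/√π) ω(k)^{1/2} f(k)` is an isometry
from `L²(ℝ^d)` into the weighted space `E = L²(ℝ^{d+1}, (ω(k)² + s²)⁻¹ d(k,s))`: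
the weighted squared norm of `j_t f` equals the squared norm of `f`. -/
theorem jt_isometry (d : ℕ) (ω : (Fin d → ℝ) → ℝ) (hω_meas : Measurable ω)
    (hω_pos : ∀ᵐ k : Fin d → ℝ, 0 < ω k) (t : ℝ)
    (f : (Fin d → ℝ) → ℂ) (hf : Measurable f) :
    ∫⁻ p : (Fin d → ℝ) × ℝ,
        ENNReal.ofReal
          (‖(Complex.exp (-(Complex.I * t * p.2)) / (Real.sqrt Real.pi : ℂ))
              * (Real.sqrt (ω p.1) : ℂ) * f p.1‖ ^ 2 / ((ω p.1) ^ 2 + p.2 ^ 2))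
      = ∫⁻ k : Fin d → ℝ, ENNReal.ofReal (‖f k‖ ^ 2) := by
  have hmeas : Measurable fun p : (Fin d → ℝ) × ℝ =>
      ENNReal.ofReal
        (‖(Complex.exp (-(Complex.I * t * p.2)) / (Real.sqrt Real.pi : ℂ))
            * (Real.sqrt (ω p.1) : ℂ) * f p.1‖ ^ 2 / ((ω p.1) ^ 2 + p.2 ^ 2)) := by
    fun_prop
  rw [Measure.volume_eq_prod, lintegral_prod _ hmeas.aemeasurable]
  refine lintegral_congr_ae ?_
  filter_upwards [hω_pos] with k hk
  exact lintegral_norm_sq_jt_div hk t (f k)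
end

section
/- Faà di Bruno formula via set partitions: if f and g are n-times continuously differentiable real functions (g mapping into the domain of f), then (f∘g)^{(n)} = ∑_{P ∈ 𝒫_n} (f^{(|P|)} ∘ g) · ∏_{B ∈ P} g^{(|B|)}, where 𝒫_n is the set of partitions of {1,…,n}. -/
/-!
Mathlib's Faà di Bruno formula `iteratedDerivWithin_comp_eq_sum_orderedFinpartition` sums over
ordered finpartitions of `Fin n`: set partitions whose parts come listed by increasing greatest
element, each part given by its increasing enumeration. Every set partition can be listed in this
way, and in only one way, so ordered finpartitions are in bijection with `Finpartition univ`
(under which the number of parts and the part sizes are preserved), and reindexing the sum along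
this bijection gives the formula.
-/

open Finset Function

namespace Finpartition

variable {α : Type*} [LinearOrder α] {s : Finset α} (P : Finpartition s)

def partMaxes : Finset α :=
  s.filter fun j => ∀ i ∈ P.part j, i ≤ j

variable {P}

lemma mem_partMaxes {j : α} : j ∈ P.partMaxes ↔ j ∈ s ∧ ∀ i ∈ P.part j, i ≤ j :=
  mem_filter

lemma max'_part_of_mem_partMaxes {j : α} (hj : j ∈ P.partMaxes) :
    (P.part j).max' (P.part_nonempty.2 (mem_partMaxes.1 hj).1) = j :=
  le_antisymm (max'_le _ _ _ (mem_partMaxes.1 hj).2)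
    (le_max' _ _ (P.mem_part_self.2 (mem_partMaxes.1 hj).1))

lemma max'_mem_partMaxes {B : Finset α} (hB : B ∈ P.parts) :
    B.max' (P.nonempty_of_mem_parts hB) ∈ P.partMaxes := by
  have hmem := B.max'_mem (P.nonempty_of_mem_parts hB)
  rw [mem_partMaxes, P.part_eq_of_mem hB hmem]
  exact ⟨P.subset hB hmem, fun i hi => le_max' B i hi⟩

lemma injOn_part_partMaxes : Set.InjOn P.part P.partMaxes := fun j hj j' hj' h => by
  rw [← max'_part_of_mem_partMaxes hj, ← max'_part_of_mem_partMaxes hj']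
  congr

lemma image_part_partMaxes : P.partMaxes.image P.part = P.parts := by
  refine (image_subset_iff.2 fun j hj => P.part_mem.2 (mem_partMaxes.1 hj).1).antisymm
    fun B hB => mem_image.2 ⟨_, max'_mem_partMaxes hB, ?_⟩
  exact P.part_eq_of_mem hB (B.max'_mem _)

lemma card_partMaxes : #P.partMaxes = #P.parts := by
  rw [← image_part_partMaxes, card_image_of_injOn injOn_part_partMaxes]

end Finpartition

namespace OrderedFinpartition

variable {n : ℕ}

theorem ext_of_range_emb {c c' : OrderedFinpartition n} (h : c.length = c'.length)
    (hr : ∀ m, Set.range (c.emb m) = Set.range (c'.emb (Fin.cast h m))) : c = c' := by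
  obtain ⟨l, size, _, emb, hemb, _, _, _⟩ := c
  obtain ⟨l', size', _, emb', hemb', _, _, _⟩ := c'
  obtain rfl : l = l' := h
  have hsize : size = size' := funext fun m => by
    have hcard := congrArg (fun S : Set (Fin n) => Nat.card S) (hr m)
    simpa only [Nat.card_range_of_injective (hemb m).injective,
      Nat.card_range_of_injective (hemb' m).injective, Nat.card_eq_fintype_card,
      Fintype.card_fin, Fin.cast_eq_self] using hcard
  subst hsize
  obtain rfl : emb = emb' := funext fun m => (hemb m).range_inj (hemb' m) |>.1 (by simpa using hr m)
  rfl

variable (c : OrderedFinpartition n)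

def part (m : Fin c.length) : Finset (Fin n) :=
  univ.image (c.emb m)

def partMax (m : Fin c.length) : Fin n :=
  c.emb m ⟨c.partSize m - 1, Nat.sub_one_lt_of_lt (c.partSize_pos m)⟩

variable {c}

@[simp]
lemma coe_part (m : Fin c.length) : (c.part m : Set (Fin n)) = Set.range (c.emb m) := by
  simp [part]

lemma card_part (m : Fin c.length) : #(c.part m) = c.partSize m := by
  rw [part, card_image_of_injective _ (c.emb_strictMono m).injective, card_univ,
    Fintype.card_fin]

lemma eq_of_mem_part {j : Fin n} {m m' : Fin c.length} (h : j ∈ c.part m) (h' : j ∈ c.part m') :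
    m = m' := by
  obtain ⟨r, -, rfl⟩ := mem_image.1 h
  obtain ⟨r', -, hr'⟩ := mem_image.1 h'
  exact congrArg Sigma.fst (c.emb_injective (a₁ := ⟨m, r⟩) (a₂ := ⟨m', r'⟩) hr'.symm)

lemma partMax_mem_part (m : Fin c.length) : c.partMax m ∈ c.part m :=
  mem_image_of_mem _ (mem_univ _)

lemma part_injective : Injective c.part := fun m _ h =>
  eq_of_mem_part (partMax_mem_part m) (h ▸ partMax_mem_part m)

lemma exists_mem_part (j : Fin n) : ∃ m, j ∈ c.part m := by
  obtain ⟨m, r, rfl⟩ := c.cover j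
  exact ⟨m, mem_image_of_mem _ (mem_univ r)⟩

lemma le_partMax {j : Fin n} {m : Fin c.length} (h : j ∈ c.part m) : j ≤ c.partMax m := by
  obtain ⟨r, -, rfl⟩ := mem_image.1 h
  exact (c.emb_strictMono m).monotone (Nat.le_sub_one_of_lt r.2)

variable (c)

def toFinpartition : Finpartition (univ : Finset (Fin n)) :=
  Finpartition.ofExistsUnique (univ.image c.part) (fun _ _ => subset_univ _)
    (fun j _ => by
      obtain ⟨m, hm⟩ := exists_mem_part j
      refine ⟨c.part m, ⟨mem_image_of_mem _ (mem_univ m), hm⟩, ?_⟩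
      rintro _ ⟨hB, hjB⟩
      obtain ⟨m', -, rfl⟩ := mem_image.1 hB
      rw [eq_of_mem_part hjB hm])
    (fun h => by
      obtain ⟨m, -, hm⟩ := mem_image.1 h
      exact notMem_empty _ (hm ▸ partMax_mem_part m))

lemma toFinpartition_parts : c.toFinpartition.parts = univ.image c.part := rfl

lemma card_toFinpartition_parts : #c.toFinpartition.parts = c.length := by
  rw [toFinpartition_parts, card_image_of_injective _ part_injective, card_univ,
    Fintype.card_fin]

lemma prod_toFinpartition_parts {M : Type*} [CommMonoid M] (F : Finset (Fin n) → M) :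
    ∏ B ∈ c.toFinpartition.parts, F B = ∏ m, F (c.part m) := by
  rw [toFinpartition_parts, prod_image fun m _ m' _ h => part_injective h]

variable {c} in
lemma toFinpartition_part {j : Fin n} {m : Fin c.length} (h : j ∈ c.part m) :
    c.toFinpartition.part j = c.part m :=
  c.toFinpartition.part_eq_of_mem (mem_image_of_mem _ (mem_univ m)) h

variable {c} in
lemma partMax_mem_partMaxes (m : Fin c.length) : c.partMax m ∈ c.toFinpartition.partMaxes := by
  rw [Finpartition.mem_partMaxes, toFinpartition_part (partMax_mem_part m)]
  exact ⟨mem_univ _, fun _ => le_partMax⟩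

variable (P : Finpartition (univ : Finset (Fin n)))

noncomputable def ofFinpartition : OrderedFinpartition n where
  length := #P.partMaxes
  partSize m := #(P.part (P.partMaxes.orderEmbOfFin rfl m))
  partSize_pos m := card_pos.2 (P.part_nonempty.2 (mem_univ _))
  emb m := (P.part (P.partMaxes.orderEmbOfFin rfl m)).orderEmbOfFin rfl
  emb_strictMono m := (orderEmbOfFin _ _).strictMono
  parts_strictMono m m' hm := by
    dsimp only
    rw [orderEmbOfFin_last, orderEmbOfFin_last,
      Finpartition.max'_part_of_mem_partMaxes (orderEmbOfFin_mem ..),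
      Finpartition.max'_part_of_mem_partMaxes (orderEmbOfFin_mem ..)]
    · exact (orderEmbOfFin _ _).strictMono hm
    all_goals exact card_pos.2 (P.part_nonempty.2 (mem_univ _))
  disjoint m _ m' _ hm := by
    simp only [onFun, range_orderEmbOfFin, disjoint_coe]
    exact P.disjoint (P.part_mem.2 (mem_univ _)) (P.part_mem.2 (mem_univ _))
      (Finpartition.injOn_part_partMaxes.ne (orderEmbOfFin_mem ..) (orderEmbOfFin_mem ..)
        ((orderEmbOfFin _ _).injective.ne hm))
  cover j := by
    have hj : P.part j ∈ P.partMaxes.image P.part := by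
      rw [Finpartition.image_part_partMaxes]
      exact P.part_mem.2 (mem_univ j)
    obtain ⟨k, hk, hkj⟩ := mem_image.1 hj
    obtain ⟨m, rfl⟩ : k ∈ Set.range (P.partMaxes.orderEmbOfFin rfl) := by simpa using hk
    exact ⟨m, by simp [hkj]⟩

lemma part_ofFinpartition (m : Fin #P.partMaxes) :
    (ofFinpartition P).part m = P.part (P.partMaxes.orderEmbOfFin rfl m) := by
  rw [← coe_inj]
  exact (coe_part (c := ofFinpartition P) m).trans (range_orderEmbOfFin _ _)

lemma toFinpartition_ofFinpartition : (ofFinpartition P).toFinpartition = P := by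
  ext1
  calc univ.image (ofFinpartition P).part
      = (univ.image (P.partMaxes.orderEmbOfFin rfl)).image P.part := by
        rw [image_image]
        exact congrArg (image · univ) (funext (part_ofFinpartition P))
    _ = P.parts := by rw [image_orderEmbOfFin_univ, Finpartition.image_part_partMaxes]

lemma ofFinpartition_toFinpartition : ofFinpartition c.toFinpartition = c := by
  have hlength : #c.toFinpartition.partMaxes = c.length :=
    Finpartition.card_partMaxes.trans c.card_toFinpartition_parts
  have hmaxes (m : Fin (ofFinpartition c.toFinpartition).length) :
      c.toFinpartition.partMaxes.orderEmbOfFin rfl m = c.partMax (Fin.cast hlength m) :=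
    congrFun (orderEmbOfFin_unique rfl (fun _ => partMax_mem_partMaxes _)
      (c.parts_strictMono.comp (Fin.cast_strictMono hlength))).symm m
  refine ext_of_range_emb hlength fun m => ?_
  calc Set.range ((ofFinpartition c.toFinpartition).emb m)
      = (c.toFinpartition.part (c.toFinpartition.partMaxes.orderEmbOfFin rfl m) : Set (Fin n)) :=
        range_orderEmbOfFin _ _
    _ = Set.range (c.emb (Fin.cast hlength m)) := by
        rw [hmaxes, toFinpartition_part (partMax_mem_part _), coe_part]

noncomputable def equivFinpartition :
    OrderedFinpartition n ≃ Finpartition (univ : Finset (Fin n)) where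
  toFun := toFinpartition
  invFun := ofFinpartition
  left_inv := ofFinpartition_toFinpartition
  right_inv := toFinpartition_ofFinpartition

end OrderedFinpartition

/-- Faà di Bruno formula via set partitions: if `f : J → ℝ` and `g : I → J` are `n`-times
continuously differentiable on open sets `I, J ⊆ ℝ`, then for `x ∈ I`,
`(f ∘ g)^{(n)}(x) = ∑_{P ∈ 𝒫_n} f^{(|P|)}(g x) ∏_{B ∈ P} g^{(|B|)}(x)`,
where `𝒫_n` is the set of partitions of `{1,…,n}`. -/
theorem faa_di_bruno (n : ℕ) (I J : Set ℝ) (hI : IsOpen I) (hJ : IsOpen J)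
    (f g : ℝ → ℝ) (hf : ContDiffOn ℝ n f J) (hg : ContDiffOn ℝ n g I)
    (hmaps : Set.MapsTo g I J) (x : ℝ) (hx : x ∈ I) :
    iteratedDerivWithin n (f ∘ g) I x
      = ∑ P : Finpartition (Finset.univ : Finset (Fin n)),
          iteratedDerivWithin P.parts.card f J (g x)
            * ∏ B ∈ P.parts, iteratedDerivWithin B.card g I x := by
  rw [iteratedDerivWithin_comp_eq_sum_orderedFinpartition (hf.contDiffWithinAt (hmaps hx))
    (hg.contDiffWithinAt hx) hJ.uniqueDiffOn hI.uniqueDiffOn hx hmaps le_rfl,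
    ← OrderedFinpartition.equivFinpartition.sum_comp]
  simp only [OrderedFinpartition.equivFinpartition, Equiv.coe_fn_mk,
    OrderedFinpartition.card_toFinpartition_parts, OrderedFinpartition.prod_toFinpartition_parts,
    OrderedFinpartition.card_part]
end
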